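/- Sign pattern of the response matrix: Suppose the node set N has at least two elements. Then the response matrix L = −A + B C⁻¹ Bᵗ of a network satisfies L_{ij} ≥ 0 for all distinct nodes i ≠ j, and L_{ii} < 0 for every node i. -/

import Mathlib

/-!
Write `Δ = [[A, B], [Bᵀ, C]]`. The energy `xᵀΔx = ½ ∑ c_vw (x_v - x_w)²` of a connected network
vanishes only on constant `x`, so `C`, which is `Δ` restricted to functions vanishing on `N`, is
positive definite; as its off-diagonal entries are `≤ 0`, its inverse is entrywise nonnegative.
Off the diagonal, `L_ij = c_ij + ∑ B_iu (C⁻¹)_uw B_jw` with `B ≤ 0`, hence `L_ij ≥ 0`. On the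
diagonal, the Schur complement identity gives `-L_ii = zᵀΔz` for the harmonic extension `z` of the
indicator of `i`, and `z` is not constant since it vanishes at another node, so `L_ii < 0`.
-/

open Matrix BigOperators

/-- The Laplacian of a network given by a symmetric conductance function `c`
(zero on the diagonal and on non-edges): `Δ v v' = -c v v'` off the diagonal
and `Δ v v = ∑_{v'} c v v'` on the diagonal. -/
noncomputable def netLap {V : Type*} [Fintype V] [DecidableEq V] (c : V → V → ℝ) :
    Matrix V V ℝ :=
  Matrix.of fun v w => if v = w then ∑ u, c v u else -c v w

/-- The response matrix `L = -A + B C⁻¹ Bᵀ` of a network with node set `N`. -/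
noncomputable def respMat {V : Type*} [Fintype V] [DecidableEq V]
    (c : V → V → ℝ) (N : Finset V) : Matrix {v : V // v ∈ N} {v : V // v ∈ N} ℝ :=
  -(netLap c).submatrix (Subtype.val : {v : V // v ∈ N} → V)
      (Subtype.val : {v : V // v ∈ N} → V)
    + (netLap c).submatrix (Subtype.val : {v : V // v ∈ N} → V)
        (Subtype.val : {v : V // v ∉ N} → V)
      * ((netLap c).submatrix (Subtype.val : {v : V // v ∉ N} → V)
          (Subtype.val : {v : V // v ∉ N} → V))⁻¹
      * ((netLap c).submatrix (Subtype.val : {v : V // v ∈ N} → V)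
          (Subtype.val : {v : V // v ∉ N} → V))ᵀ

theorem Matrix.PosDef.nonneg_of_mulVec_nonneg {ι : Type*} [Fintype ι] {M : Matrix ι ι ℝ}
    (hM : M.PosDef) (hM_offDiag : ∀ i j, i ≠ j → M i j ≤ 0) {x : ι → ℝ}
    (hx : 0 ≤ M *ᵥ x) : 0 ≤ x := by
  -- Test against the negative part `n` of `x`: the sign pattern of `M` gives `nᵀMn ≤ -nᵀMx ≤ 0`.
  set n : ι → ℝ := fun i => max (-x i) 0
  have hn_nonneg : ∀ i, 0 ≤ n i := fun i => le_max_right _ _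
  have hterm : ∀ i j, n i * M i j * n j ≤ -(n i * (M i j * x j)) := by
    intro i j
    rcases eq_or_ne i j with rfl | hij
    · have : n i * (n i + x i) = 0 := by
        rcases le_total 0 (x i) with h | h <;> simp [n, h]
      exact le_of_eq (by linear_combination M i i * this)
    · have : 0 ≤ n j + x j := by
        linarith [le_max_left (-x j) 0]
      nlinarith [hM_offDiag i j hij, hn_nonneg i, mul_nonneg (hn_nonneg i) this]
  have hquad : n ⬝ᵥ M *ᵥ n ≤ 0 := calc
      n ⬝ᵥ M *ᵥ n = ∑ i, ∑ j, n i * M i j * n j := by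
        simp only [dotProduct, mulVec, Finset.mul_sum, mul_assoc]
      _ ≤ ∑ i, ∑ j, -(n i * (M i j * x j)) :=
        Finset.sum_le_sum fun i _ => Finset.sum_le_sum fun j _ => hterm i j
      _ = -∑ i, n i * (M *ᵥ x) i := by
        simp only [mulVec, dotProduct, Finset.mul_sum, Finset.sum_neg_distrib]
      _ ≤ 0 := neg_nonpos.2 (Finset.sum_nonneg fun i _ => mul_nonneg (hn_nonneg i) (hx i))
  have hn_zero : n = 0 := by
    by_contra h
    exact (hM.dotProduct_mulVec_pos h).not_ge (by simpa using hquad)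
  intro i
  simpa [n] using congrFun hn_zero i

theorem Matrix.PosDef.inv_apply_nonneg {ι : Type*} [Fintype ι] [DecidableEq ι]
    {M : Matrix ι ι ℝ} (hM : M.PosDef) (hM_offDiag : ∀ i j, i ≠ j → M i j ≤ 0) (i j : ι) :
    0 ≤ M⁻¹ i j := by
  have hcol : M *ᵥ (M⁻¹ *ᵥ Pi.single j 1) = Pi.single j 1 := by
    rw [mulVec_mulVec, mul_nonsing_inv _ ((isUnit_iff_isUnit_det M).1 hM.isUnit), one_mulVec]
  have := hM.nonneg_of_mulVec_nonneg hM_offDiag (x := M⁻¹ *ᵥ Pi.single j 1)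
    (by rw [hcol]; exact Pi.single_nonneg.2 zero_le_one) i
  simpa [mulVec_single_one] using this

theorem SimpleGraph.Preconnected.apply_eq_of_forall_adj {V β : Type*} {G : SimpleGraph V}
    (hG : G.Preconnected) {f : V → β} (hf : ∀ v w, G.Adj v w → f v = f w) (v w : V) :
    f v = f w := by
  obtain ⟨p⟩ := hG v w
  induction p with
  | nil => rfl
  | cons hadj _ ih => exact (hf _ _ hadj).trans ih

structure IsNetwork {V : Type*} (c : V → V → ℝ) : Prop where
  symm : ∀ v w, c v w = c w v
  nonneg : ∀ v w, 0 ≤ c v w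
  diag_eq_zero : ∀ v, c v v = 0
  connected : (SimpleGraph.fromRel fun v w : V => c v w ≠ 0).Connected

section Laplacian

variable {V : Type*} [Fintype V] [DecidableEq V] {c : V → V → ℝ}

theorem netLap_apply_of_ne {v w : V} (hvw : v ≠ w) : netLap c v w = -c v w := by
  simp [netLap, hvw]

theorem netLap_isHermitian (hsymm : ∀ v w, c v w = c w v) : (netLap c).IsHermitian := by
  ext v w
  rcases eq_or_ne v w with rfl | hvw
  · rfl
  · simp [netLap_apply_of_ne hvw, netLap_apply_of_ne hvw.symm, hsymm]

theorem netLap_mulVec_apply (hdiag : ∀ v, c v v = 0) (x : V → ℝ) (v : V) :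
    (netLap c *ᵥ x) v = ∑ w, c v w * (x v - x w) := by
  have hrow : ∀ w, netLap c v w = (if v = w then ∑ u, c v u else 0) - c v w := by
    intro w
    rcases eq_or_ne v w with rfl | hvw
    · simp [netLap, hdiag]
    · simp [netLap, hvw]
  simp only [mulVec, dotProduct, hrow, sub_mul, Finset.sum_sub_distrib, ite_mul, zero_mul,
    Finset.sum_ite_eq, Finset.mem_univ, if_true, Finset.sum_mul, mul_sub]

theorem two_mul_dotProduct_netLap_mulVec (hsymm : ∀ v w, c v w = c w v)
    (hdiag : ∀ v, c v v = 0) (x : V → ℝ) :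
    2 * (x ⬝ᵥ netLap c *ᵥ x) = ∑ v, ∑ w, c v w * (x v - x w) ^ 2 := by
  have hdot : x ⬝ᵥ netLap c *ᵥ x = ∑ v, ∑ w, x v * (c v w * (x v - x w)) := by
    simp only [dotProduct, netLap_mulVec_apply hdiag, Finset.mul_sum]
  have hswap : ∑ v, ∑ w, x v * (c v w * (x v - x w))
      = ∑ v, ∑ w, -(x w * (c v w * (x v - x w))) := by
    rw [Finset.sum_comm]
    exact Finset.sum_congr rfl fun v _ => Finset.sum_congr rfl fun w _ => by rw [hsymm]; ring
  rw [hdot, two_mul]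
  nth_rw 2 [hswap]
  simp only [← Finset.sum_add_distrib]
  exact Finset.sum_congr rfl fun v _ => Finset.sum_congr rfl fun w _ => by ring

theorem dotProduct_netLap_mulVec_pos (hc : IsNetwork c)
    {x : V → ℝ} {v w : V} (hx : x v ≠ x w) : 0 < x ⬝ᵥ netLap c *ᵥ x := by
  have hterm : ∀ v w, 0 ≤ c v w * (x v - x w) ^ 2 := fun v w =>
    mul_nonneg (hc.nonneg v w) (sq_nonneg _)
  refine lt_of_not_ge fun hle => hx (hc.connected.preconnected.apply_eq_of_forall_adj ?_ v w)
  intro a b hab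
  have hsum : ∑ v, ∑ w, c v w * (x v - x w) ^ 2 = 0 :=
    le_antisymm (by linarith [two_mul_dotProduct_netLap_mulVec hc.symm hc.diag_eq_zero x])
      (Finset.sum_nonneg fun v _ => Finset.sum_nonneg fun w _ => hterm v w)
  rw [Finset.sum_eq_zero_iff_of_nonneg fun v _ => Finset.sum_nonneg fun w _ => hterm v w] at hsum
  have hab_term : c a b * (x a - x b) ^ 2 = 0 :=
    (Finset.sum_eq_zero_iff_of_nonneg fun w _ => hterm a w).1 (hsum a (Finset.mem_univ a)) b
      (Finset.mem_univ b)
  have hcab : c a b ≠ 0 := by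
    obtain ⟨-, h | h⟩ := (SimpleGraph.fromRel_adj _ a b).1 hab
    exacts [h, by rwa [hc.symm]]
  exact sub_eq_zero.1 <|
    (pow_eq_zero_iff two_ne_zero).1 ((mul_eq_zero.1 hab_term).resolve_left hcab)

end Laplacian

theorem Matrix.mul_mul_transpose_apply_nonneg {m n : Type*} [Fintype n] {B : Matrix m n ℝ}
    {P : Matrix n n ℝ} (hB : ∀ i k, B i k ≤ 0) (hP : ∀ k l, 0 ≤ P k l) (i j : m) :
    0 ≤ (B * P * Bᵀ) i j :=
  Finset.sum_nonneg fun l _ => mul_nonneg_of_nonpos_of_nonpos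
    (Finset.sum_nonpos fun k _ => mul_nonpos_of_nonpos_of_nonneg (hB i k) (hP k l)) (hB j l)

theorem Matrix.dotProduct_submatrix_equiv_mulVec {m n : Type*} [Fintype m] [Fintype n]
    (M : Matrix n n ℝ) (e : m ≃ n) (w : m → ℝ) :
    w ⬝ᵥ M.submatrix e e *ᵥ w = (w ∘ e.symm) ⬝ᵥ M *ᵥ (w ∘ e.symm) := by
  rw [submatrix_mulVec_equiv, ← comp_equiv_symm_dotProduct]

theorem submatrix_sumCompl_eq_fromBlocks {V : Type*} [DecidableEq V] (N : Finset V)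
    {M : Matrix V V ℝ} (hM : M.IsHermitian) :
    M.submatrix (Equiv.sumCompl (· ∈ N)) (Equiv.sumCompl (· ∈ N)) =
      fromBlocks (M.submatrix (Subtype.val : {v // v ∈ N} → V) Subtype.val)
        (M.submatrix (Subtype.val : {v // v ∈ N} → V) (Subtype.val : {v // v ∉ N} → V))
        (M.submatrix (Subtype.val : {v // v ∈ N} → V) (Subtype.val : {v // v ∉ N} → V))ᴴ
        (M.submatrix (Subtype.val : {v // v ∉ N} → V) Subtype.val) := by
  ext (i | i) (j | j)
  · rfl
  · rfl
  · exact (hM.apply _ _).symm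
  · rfl

section Network

variable {V : Type*} [Fintype V] [DecidableEq V] {c : V → V → ℝ} {N : Finset V}

-- The blocks `A`, `B`, `C` of `Δ`.
local notation "Δᴺᴺ" =>
  Matrix.submatrix (netLap c) (Subtype.val : {v // v ∈ N} → V) (Subtype.val : {v // v ∈ N} → V)
local notation "Δᴺᴵ" =>
  Matrix.submatrix (netLap c) (Subtype.val : {v // v ∈ N} → V) (Subtype.val : {v // v ∉ N} → V)
local notation "Δᴵᴵ" =>
  Matrix.submatrix (netLap c) (Subtype.val : {v // v ∉ N} → V) (Subtype.val : {v // v ∉ N} → V)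

-- On `I` its values `y` solve `C y = -Bᵀ x`, i.e. `Δ z` vanishes on `I`.
variable (c N) in
noncomputable def harmonicExtension (x : {v // v ∈ N} → ℝ) : V → ℝ :=
  Sum.elim x (-(((Δᴵᴵ)⁻¹ * (Δᴺᴵ)ᵀ) *ᵥ x)) ∘ (Equiv.sumCompl (· ∈ N)).symm

theorem harmonicExtension_apply_coe (x : {v // v ∈ N} → ℝ) (i : {v // v ∈ N}) :
    harmonicExtension c N x i = x i := by
  simp [harmonicExtension]

theorem dotProduct_respMat_mulVec (hsymm : ∀ v w, c v w = c w v) (hC : IsUnit Δᴵᴵ)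
    (x : {v // v ∈ N} → ℝ) :
    x ⬝ᵥ respMat c N *ᵥ x
      = -(harmonicExtension c N x ⬝ᵥ netLap c *ᵥ harmonicExtension c N x) := by
  have := hC.invertible
  have hΔ := netLap_isHermitian hsymm
  have hschur := schur_complement_eq₂₂ Δᴺᴺ Δᴺᴵ (D := Δᴵᴵ) x (-(((Δᴵᴵ)⁻¹ * (Δᴺᴵ)ᴴ) *ᵥ x))
    (hΔ.submatrix _)
  rw [← submatrix_sumCompl_eq_fromBlocks N hΔ] at hschur
  simp only [star_trivial, ← dotProduct_mulVec, add_neg_cancel, dotProduct_zero, zero_add,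
    dotProduct_submatrix_equiv_mulVec, conjTranspose_eq_transpose_of_trivial] at hschur
  rw [harmonicExtension, hschur, respMat, neg_add_eq_sub, ← neg_sub, neg_mulVec, dotProduct_neg]

theorem netLap_submatrix_compl_posDef (hc : IsNetwork c) (hN : N.Nonempty) :
    (Δᴵᴵ).PosDef := by
  have hΔ := netLap_isHermitian hc.symm
  refine .of_dotProduct_mulVec_pos (hΔ.submatrix _) fun y hy => ?_
  obtain ⟨u, hu⟩ := Function.ne_iff.1 hy
  obtain ⟨b, hb⟩ := hN
  have hquad := dotProduct_submatrix_equiv_mulVec (netLap c) (Equiv.sumCompl (· ∈ N)) (0 ⊕ᵥ y)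
  simp only [submatrix_sumCompl_eq_fromBlocks N hΔ, fromBlocks_mulVec, Sum.elim_comp_inl,
    Sum.elim_comp_inr, mulVec_zero, zero_add, sumElim_dotProduct_sumElim, zero_dotProduct] at hquad
  rw [star_trivial, hquad]
  refine dotProduct_netLap_mulVec_pos hc (v := u) (w := b) ?_
  simpa [Equiv.sumCompl_symm_apply_of_pos hb] using hu

theorem netLap_submatrix_compl_inv_apply_nonneg (hc : IsNetwork c) (hN : N.Nonempty)
    (u w : {v // v ∉ N}) : 0 ≤ (Δᴵᴵ)⁻¹ u w :=
  (netLap_submatrix_compl_posDef hc hN).inv_apply_nonneg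
    (fun u w huw => by
      simpa [netLap_apply_of_ne (Subtype.val_injective.ne huw)] using hc.nonneg u w) u w

theorem respMat_apply_nonneg_of_ne (hc : IsNetwork c) (hN : N.Nonempty)
    {i j : {v // v ∈ N}} (hij : i ≠ j) : 0 ≤ respMat c N i j := by
  have hB : ∀ (k : {v // v ∈ N}) (u : {v // v ∉ N}), (Δᴺᴵ) k u ≤ 0 := fun k u => by
    simpa [netLap_apply_of_ne (show (k : V) ≠ u from fun h => u.2 (h ▸ k.2))] using hc.nonneg k u
  have hA : 0 ≤ -(Δᴺᴺ) i j := by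
    simpa [netLap_apply_of_ne (Subtype.val_injective.ne hij)] using hc.nonneg i j
  exact add_nonneg hA (mul_mul_transpose_apply_nonneg hB
    (netLap_submatrix_compl_inv_apply_nonneg hc hN) i j)

theorem respMat_apply_self_neg (hc : IsNetwork c) (hN : N.Nontrivial)
    (i : {v // v ∈ N}) : respMat c N i i < 0 := by
  have : Nontrivial {v // v ∈ N} := Set.Nontrivial.coe_sort hN
  obtain ⟨j, hji⟩ := exists_ne i
  have hC := (netLap_submatrix_compl_posDef hc hN.nonempty).isUnit
  have hext := harmonicExtension_apply_coe (c := c) (Pi.single i 1)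
  have hdiag_entry : Pi.single i 1 ⬝ᵥ respMat c N *ᵥ Pi.single i 1 = respMat c N i i := by
    simp
  rw [← hdiag_entry, dotProduct_respMat_mulVec hc.symm hC, neg_lt_zero]
  refine dotProduct_netLap_mulVec_pos hc (v := i) (w := j) ?_
  rw [hext i, hext j, Pi.single_eq_same, Pi.single_eq_of_ne hji]
  exact one_ne_zero

end Network

/-- Sign pattern of the response matrix: if there are at least two nodes then the
off-diagonal entries of `L` are nonnegative and the diagonal entries are negative. -/
theorem response_matrix_signs {V : Type*} [Fintype V] [DecidableEq V]
    (c : V → V → ℝ)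
    (hsymm : ∀ v w, c v w = c w v)
    (hnonneg : ∀ v w, 0 ≤ c v w)
    (hdiag : ∀ v, c v v = 0)
    (hconn : (SimpleGraph.fromRel fun v w : V => c v w ≠ 0).Connected)
    (N : Finset V) (hN : 2 ≤ N.card) :
    (∀ i j : {v : V // v ∈ N}, i ≠ j → 0 ≤ respMat c N i j) ∧
    (∀ i : {v : V // v ∈ N}, respMat c N i i < 0) := by
  have hc : IsNetwork c := ⟨hsymm, hnonneg, hdiag, hconn⟩
  have hN' : N.Nontrivial := Finset.one_lt_card_iff_nontrivial.1 hN
  exact ⟨fun i j hij => respMat_apply_nonneg_of_ne hc hN'.nonempty hij,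
    respMat_apply_self_neg hc hN'⟩
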